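/- Let the braid monoid B⁺_∞ act on a set X, let X^n := {x ∈ X : σ_k · x = x for all k ≥ n+2}, and suppose x ∈ X^n. Then for all N ≥ 1, applying the composition (σ_{n+1}⋯σ_{n+N})(σ_{n+1}⋯σ_{n+N-1})⋯(σ_{n+1}) to x equals applying σ_{n+N} σ_{n+N-1} ⋯ σ_{n+1} to x. -/

import Mathlib

/-- Action of the increasing word `σ_i σ_{i+1} ⋯ σ_j` on `x`:
`seqAct a i j x = a i (a (i+1) (⋯ (a j x)))`. -/
def seqAct {X : Type*} (a : ℕ → X → X) (i j : ℕ) (x : X) : X :=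
  ((List.range (j + 1 - i)).map (fun t => a (i + t))).foldr (fun f y => f y) x

/-- Action of the word `(σ_{n+1}⋯σ_{n+N})(σ_{n+1}⋯σ_{n+N-1})⋯(σ_{n+1})` on `x`
(the rightmost factor acting first). -/
def iterAct {X : Type*} (a : ℕ → X → X) (n : ℕ) : ℕ → X → X
  | 0, x => x
  | N + 1, x => seqAct a (n + 1) (n + N + 1) (iterAct a n N x)

/-!
Moving a single generator `σ_j` (with `i ≤ j < k`) across the increasing word `σ_i ⋯ σ_k` turns
it into `σ_{j+1}`: one braid relation where `σ_j` meets `σ_j σ_{j+1}`, far commutations elsewhere.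
Hence pushing the increasing word `σ_{n+1} ⋯ σ_{n+N+1}` through the decreasing word
`σ_{n+N} ⋯ σ_{n+1}` shifts the latter up by one; on `x ∈ X^n` the increasing word then acts as
`σ_{n+1}` alone, which completes the decreasing word of length `N + 1`. Induction on `N`.
-/

lemma List.foldr_apply_eq_self {X : Type*} {l : List (X → X)} {x : X} (h : ∀ f ∈ l, f x = x) :
    l.foldr (fun f y => f y) x = x := by
  induction l with
  | nil => rfl
  | cons f l ih => simp_all

section

variable {X : Type*} (a : ℕ → X → X)

/-- The decreasing word `σ_{n+N} σ_{n+N-1} ⋯ σ_{n+1}`. -/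
def decAct (n N : ℕ) (x : X) : X :=
  ((List.range N).map (fun t => a (n + N - t))).foldr (fun f y => f y) x

lemma seqAct_of_lt {i j : ℕ} (h : j < i) (x : X) : seqAct a i j x = x := by
  simp [seqAct, Nat.sub_eq_zero_of_le h]

lemma seqAct_of_le {i j : ℕ} (h : i ≤ j) (x : X) :
    seqAct a i j x = a i (seqAct a (i + 1) j x) := by
  unfold seqAct
  rw [show j + 1 - i = (j - i) + 1 by omega, show j + 1 - (i + 1) = j - i by omega,
    List.range_succ_eq_map, List.map_cons, List.foldr_cons, List.map_map, add_zero]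
  congr 3
  funext t
  exact congrArg a (by omega)

lemma seqAct_succ_right {i j : ℕ} (h : i ≤ j + 1) (x : X) :
    seqAct a i (j + 1) x = seqAct a i j (a (j + 1) x) := by
  unfold seqAct
  rw [show j + 1 + 1 - i = (j + 1 - i) + 1 by omega, List.range_succ, List.map_append,
    List.foldr_append]
  simp only [List.map_cons, List.map_nil, List.foldr_cons, List.foldr_nil]
  rw [show i + (j + 1 - i) = j + 1 by omega]

lemma seqAct_eq_self {i : ℕ} {x : X} (h : ∀ m, i ≤ m → a m x = x) (j : ℕ) :
    seqAct a i j x = x :=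
  List.foldr_apply_eq_self (by simpa using fun t _ => h (i + t) (by omega))

lemma decAct_succ (n N : ℕ) (x : X) :
    decAct a n (N + 1) x = a (n + N + 1) (decAct a n N x) := by
  unfold decAct
  rw [List.range_succ_eq_map, List.map_cons, List.foldr_cons, List.map_map,
    show n + (N + 1) - 0 = n + N + 1 by omega]
  congr 3
  funext t
  exact congrArg a (by omega)

lemma decAct_succ_eq_decAct_apply (n N : ℕ) (x : X) :
    decAct a n (N + 1) x = decAct a (n + 1) N (a (n + 1) x) := by
  unfold decAct
  rw [List.range_succ, List.map_append, List.foldr_append]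
  simp only [List.map_cons, List.map_nil, List.foldr_cons, List.foldr_nil]
  rw [show n + (N + 1) - N = n + 1 by omega, show n + (N + 1) = n + 1 + N by omega]

variable {a}

lemma seqAct_apply_comm_of_add_one_lt
    (hcomm : ∀ i j, 1 ≤ i → i + 1 < j → ∀ x, a i (a j x) = a j (a i x))
    {i j : ℕ} (hj : 1 ≤ j) (hji : j + 1 < i) (k : ℕ) (y : X) :
    seqAct a i k (a j y) = a j (seqAct a i k y) := by
  induction k generalizing y with
  | zero => rw [seqAct_of_lt a (by omega), seqAct_of_lt a (by omega)]
  | succ k ih =>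
    rcases le_or_gt i (k + 1) with hle | hlt
    · rw [seqAct_succ_right a hle, seqAct_succ_right a hle,
        ← hcomm j (k + 1) hj (by omega), ih]
    · rw [seqAct_of_lt a hlt, seqAct_of_lt a hlt]

lemma seqAct_apply_of_le_of_lt
    (hbraid : ∀ i, 1 ≤ i → ∀ x, a i (a (i + 1) (a i x)) = a (i + 1) (a i (a (i + 1) x)))
    (hcomm : ∀ i j, 1 ≤ i → i + 1 < j → ∀ x, a i (a j x) = a j (a i x))
    {i j k : ℕ} (hi : 1 ≤ i) (hij : i ≤ j) (hjk : j < k) (y : X) :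
    seqAct a i k (a j y) = a (j + 1) (seqAct a i k y) := by
  have hik : i ≤ k := by omega
  rcases hij.eq_or_lt with rfl | hlt
  · have hik' : i + 1 ≤ k := by omega
    rw [seqAct_of_le a hik, seqAct_of_le a hik',
      seqAct_apply_comm_of_add_one_lt hcomm hi (by omega), hbraid i hi,
      ← seqAct_of_le a hik', ← seqAct_of_le a hik]
  · rw [seqAct_of_le a hik, seqAct_apply_of_le_of_lt hbraid hcomm (by omega) hlt hjk,
      hcomm i (j + 1) hi (by omega), ← seqAct_of_le a hik]
termination_by j - i

lemma seqAct_decAct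
    (hbraid : ∀ i, 1 ≤ i → ∀ x, a i (a (i + 1) (a i x)) = a (i + 1) (a i (a (i + 1) x)))
    (hcomm : ∀ i j, 1 ≤ i → i + 1 < j → ∀ x, a i (a j x) = a j (a i x))
    {n i k : ℕ} (hi : 1 ≤ i) (hin : i ≤ n + 1) (M : ℕ) (hk : n + M < k) (y : X) :
    seqAct a i k (decAct a n M y) = decAct a (n + 1) M (seqAct a i k y) := by
  induction M with
  | zero => rfl
  | succ M ih =>
    rw [decAct_succ, seqAct_apply_of_le_of_lt (j := n + M + 1) hbraid hcomm hi (by omega) hk,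
      ih (by omega), decAct_succ, add_right_comm n 1 M]

end

theorem iterAct_eq_decreasing_word_general {X : Type*} (a : ℕ → X → X)
    (hB1 : ∀ i, 1 ≤ i → ∀ x, a i (a (i + 1) (a i x)) = a (i + 1) (a i (a (i + 1) x)))
    (hB2 : ∀ i j, 1 ≤ i → i + 1 < j → ∀ x, a i (a j x) = a j (a i x))
    (n : ℕ) (x : X) (hx : ∀ m, n + 2 ≤ m → a m x = x) (N : ℕ) :
    iterAct a n N x
      = ((List.range N).map (fun t => a (n + N - t))).foldr (fun f y => f y) x := by
  change iterAct a n N x = decAct a n N x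
  induction N with
  | zero => rfl
  | succ N ih =>
    calc iterAct a n (N + 1) x
        = seqAct a (n + 1) (n + N + 1) (decAct a n N x) := by rw [iterAct, ih]
      _ = decAct a (n + 1) N (seqAct a (n + 1) (n + N + 1) x) :=
          seqAct_decAct hB1 hB2 (by omega) le_rfl N (by omega) x
      _ = decAct a (n + 1) N (a (n + 1) x) := by
          rw [seqAct_of_le a (by omega), seqAct_eq_self a hx]
      _ = decAct a n (N + 1) x := (decAct_succ_eq_decAct_apply a n N x).symm

/-- Lemma 3.2: if `x ∈ X^n`, i.e. `σ_m · x = x` for all `m ≥ n+2`, then for `N ≥ 1` the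
word `(σ_{n+1}⋯σ_{n+N})(σ_{n+1}⋯σ_{n+N-1})⋯σ_{n+1}` applied to `x` equals the decreasing
word `σ_{n+N} σ_{n+N-1} ⋯ σ_{n+1}` applied to `x`. -/
theorem iterAct_eq_decreasing_word {X : Type*} (a : ℕ → X → X)
    (hB1 : ∀ i, 1 ≤ i → ∀ x, a i (a (i + 1) (a i x)) = a (i + 1) (a i (a (i + 1) x)))
    (hB2 : ∀ i j, 1 ≤ i → i + 1 < j → ∀ x, a i (a j x) = a j (a i x))
    (n : ℕ) (x : X) (hx : ∀ m, n + 2 ≤ m → a m x = x) (N : ℕ) (hN : 1 ≤ N) :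
    iterAct a n N x
      = ((List.range N).map (fun t => a (n + N - t))).foldr (fun f y => f y) x :=
  iterAct_eq_decreasing_word_general a hB1 hB2 n x hx N
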